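/- Let p = p(n) ∈ [0,1] be a sequence of edge probabilities such that (n(1−p))⁴p² → ∞ as n → ∞. Then the probability that the Erdős–Rényi random graph G(n,1−p) is 4-chordal tends to 0 as n → ∞; that is, with high probability G(n,1−p) contains an induced (chordless) 4-cycle. -/

import Mathlib

/-!
Second moment method. Let `X` count the labelled chordless 4-cycles `v : ZMod 4 → Fin n` of
`G(n, q)` and put `x = n² q² (1 - q)`, so that `E X ≍ n⁴ q⁴ (1 - q)² = x²`. Two labelled 4-cycles
sharing at most one vertex have disjoint sets of sides and diagonals, hence independent events.
If `w` meets `v` in at least two vertices but has a vertex `w k` outside `v`, the two sides and the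
diagonal of `w` through `w k` are new, so both events hold with probability at most
`q⁶ (1 - q)³`; there are `O(n²)` such `w` for each `v`. The `O(1)` many `w` inside `v` contribute
at most `q⁴ (1 - q)²` each. Hence `P(X = 0) ≤ Var X / (E X)² = O(1/x + 1/x²)`, and with
`q = 1 - p` the hypothesis says exactly that `x² → ∞`.
-/

open Filter

/-- Probability weight of a given graph `G` under the Erdős–Rényi model `G(n,p)`:
each of the `n.choose 2` possible edges is present independently with probability `p`. -/
noncomputable def graphWeight (n : ℕ) (p : ℝ) (G : SimpleGraph (Fin n)) : ℝ :=
  p ^ Nat.card G.edgeSet * (1 - p) ^ (n.choose 2 - Nat.card G.edgeSet)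

/-- Probability of the event `A` under the Erdős–Rényi random graph `G(n,p)`. -/
noncomputable def erProb (n : ℕ) (p : ℝ) (A : Set (SimpleGraph (Fin n))) : ℝ :=
  ∑ G : SimpleGraph (Fin n), A.indicator (graphWeight n p) G

/-- `v : ZMod k → V` describes a chordless (induced) `k`-cycle of `G`:
it is injective, consecutive vertices are adjacent, and non-consecutive
vertices are non-adjacent. -/
def IsChordlessCycleOn {V : Type} (G : SimpleGraph V) {k : ℕ} (v : ZMod k → V) : Prop :=
  Function.Injective v ∧
    (∀ i : ZMod k, G.Adj (v i) (v (i + 1))) ∧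
    ∀ i j : ZMod k, i ≠ j → j ≠ i + 1 → i ≠ j + 1 → ¬G.Adj (v i) (v j)

/-- A graph is 4-chordal if every cycle of length 4 has a chord, i.e. there is
no chordless 4-cycle. -/
def FourChordal {V : Type} (G : SimpleGraph V) : Prop :=
  ¬∃ v : ZMod 4 → V, IsChordlessCycleOn G v

/-- A graph is chordal if every cycle of length at least 4 has a chord, i.e. there is
no chordless cycle of length at least 4. -/
def Chordal {V : Type} (G : SimpleGraph V) : Prop :=
  ∀ k : ℕ, 4 ≤ k → ¬∃ v : ZMod k → V, IsChordlessCycleOn G v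

open Finset SimpleGraph

theorem sum_indicator_eq_zero_mul_sq_le {ι : Type*} [Fintype ι] {w : ι → ℝ}
    (hw : ∀ i, 0 ≤ w i) (hw1 : ∑ i, w i = 1) (X : ι → ℝ) :
    (∑ i, {i | X i = 0}.indicator w i) * (∑ i, w i * X i) ^ 2 ≤
      ∑ i, w i * X i ^ 2 - (∑ i, w i * X i) ^ 2 := by
  set P₀ := ∑ i, {i | X i = 0}.indicator w i
  have hP₀ : 0 ≤ P₀ := sum_nonneg fun i _ => Set.indicator_nonneg (fun i _ => hw i) i
  have hcompl : ∑ i, {i | X i = 0}ᶜ.indicator w i = 1 - P₀ := by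
    rw [← hw1, eq_sub_iff_add_eq, ← sum_add_distrib]
    exact sum_congr rfl fun i _ => congrFun (Set.indicator_compl_add_self _ w) i
  -- Cauchy–Schwarz against the indicator of `{X ≠ 0}`, which carries all of `∑ w X`.
  have hCS : (∑ i, w i * X i) ^ 2 ≤ (1 - P₀) * ∑ i, w i * X i ^ 2 := by
    rw [← hcompl]
    refine sum_sq_le_sum_mul_sum_of_sq_le_mul _ (fun i _ => Set.indicator_nonneg
      (fun i _ => hw i) i) (fun i _ => mul_nonneg (hw i) (sq_nonneg _)) fun i _ => ?_
    by_cases hX : X i = 0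
    · simp [hX]
    · rw [Set.indicator_of_mem (show i ∈ {i | X i = 0}ᶜ from hX)]
      exact le_of_eq (by ring)
  have hX2 : 0 ≤ ∑ i, w i * X i ^ 2 := sum_nonneg fun i _ => mul_nonneg (hw i) (sq_nonneg _)
  have hmean : (∑ i, w i * X i) ^ 2 ≤ ∑ i, w i * X i ^ 2 := by nlinarith
  nlinarith [mul_le_mul_of_nonneg_left hmean hP₀]

section Sym2Map

variable {α β : Type*}

lemma not_isDiag_of_mem_image_map [DecidableEq β] {f : α → β} (hf : Function.Injective f)
    {P : Finset (Sym2 α)} (hP : ∀ e ∈ P, ¬e.IsDiag) : ∀ e ∈ P.image (Sym2.map f), ¬e.IsDiag := by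
  simp only [mem_image, forall_exists_index, and_imp]
  rintro _ e he rfl
  rw [Sym2.isDiag_map hf]
  exact hP e he

lemma disjoint_image_map_of_exists_notMem_range [DecidableEq β] {v w : α → β}
    (P Q : Finset (Sym2 α)) (h : ∀ e ∈ Q, ∃ x ∈ e, w x ∉ Set.range v) :
    Disjoint (P.image (Sym2.map v)) (Q.image (Sym2.map w)) := by
  simp only [Finset.disjoint_left, mem_image, not_exists, not_and, forall_exists_index, and_imp]
  rintro _ e - rfl e' he' heq
  obtain ⟨x, hx, hwx⟩ := h e' he'
  obtain ⟨a, -, ha⟩ := Sym2.mem_map.1 (heq ▸ Sym2.mem_map.2 ⟨x, hx, rfl⟩ : w x ∈ Sym2.map v e)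
  exact hwx ⟨a, ha⟩

lemma exists_mem_notMem_range_of_subsingleton {v w : α → β} (hw : Function.Injective w)
    (h : (Set.range v ∩ Set.range w).Subsingleton) {e : Sym2 α} (he : ¬e.IsDiag) :
    ∃ x ∈ e, w x ∉ Set.range v := by
  induction e using Sym2.ind with
  | _ a b =>
    by_contra! hab
    have := h ⟨hab a (Sym2.mem_mk_left a b), a, rfl⟩ ⟨hab b (Sym2.mem_mk_right a b), b, rfl⟩
    exact he (Sym2.mk_isDiag_iff.2 (hw this))

end Sym2Map

section Counting

variable {ι α : Type*} [Fintype ι] [DecidableEq ι] [Fintype α] [DecidableEq α]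

lemma card_filter_forall_mem (t : Finset ι) (R : Finset α) :
    #{w : ι → α | ∀ k ∈ t, w k ∈ R} = #R ^ #t * Fintype.card α ^ (Fintype.card ι - #t) := by
  have hpi : ({w | ∀ k ∈ t, w k ∈ R} : Finset (ι → α)) =
      Fintype.piFinset fun k => if k ∈ t then R else univ := by
    ext w
    simp only [mem_filter, mem_univ, true_and, Fintype.mem_piFinset]
    refine forall_congr' fun k => ?_
    split_ifs with hk <;> simp [hk]
  simp only [hpi, Fintype.card_piFinset, apply_ite card, prod_ite, prod_const, card_univ]
  rw [filter_mem_eq_inter, univ_inter, filter_not, filter_mem_eq_inter, univ_inter,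
    card_sdiff_of_subset (subset_univ t), card_univ]

lemma card_filter_exists_ne_mem_le (R : Finset α) :
    #{w : ι → α | ∃ i j, i ≠ j ∧ w i ∈ R ∧ w j ∈ R} ≤
      Fintype.card ι ^ 2 * (#R ^ 2 * Fintype.card α ^ (Fintype.card ι - 2)) := by
  have hsub : ({w | ∃ i j, i ≠ j ∧ w i ∈ R ∧ w j ∈ R} : Finset (ι → α)) ⊆
      (univ : Finset ι).offDiag.biUnion
        fun ij => {w | ∀ k ∈ ({ij.1, ij.2} : Finset ι), w k ∈ R} := by
    intro w hw
    obtain ⟨i, j, hij, hi, hj⟩ := (mem_filter.1 hw).2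
    exact mem_biUnion.2 ⟨(i, j), mem_offDiag.2 ⟨mem_univ i, mem_univ j, hij⟩,
      mem_filter.2 ⟨mem_univ w, by simp [hi, hj]⟩⟩
  calc #{w : ι → α | ∃ i j, i ≠ j ∧ w i ∈ R ∧ w j ∈ R}
      ≤ ∑ ij ∈ (univ : Finset ι).offDiag,
          #{w : ι → α | ∀ k ∈ ({ij.1, ij.2} : Finset ι), w k ∈ R} :=
        (card_le_card hsub).trans card_biUnion_le
    _ = ∑ ij ∈ (univ : Finset ι).offDiag, #R ^ 2 * Fintype.card α ^ (Fintype.card ι - 2) :=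
        sum_congr rfl fun ij hij => by
          rw [card_filter_forall_mem, card_pair (mem_offDiag.1 hij).2.2]
    _ ≤ Fintype.card ι ^ 2 * (#R ^ 2 * Fintype.card α ^ (Fintype.card ι - 2)) := by
        rw [sum_const, smul_eq_mul, offDiag_card, card_univ]
        exact Nat.mul_le_mul_right _ ((Nat.sub_le _ _).trans_eq (sq _).symm)

end Counting

def edgePattern {V : Type} (S T : Finset (Sym2 V)) : Set (SimpleGraph V) :=
  {G | ↑S ⊆ G.edgeSet ∧ Disjoint (↑T) G.edgeSet}

lemma edgePattern_inter {V : Type} [DecidableEq V] (S T S' T' : Finset (Sym2 V)) :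
    edgePattern S T ∩ edgePattern S' T' = edgePattern (S ∪ S') (T ∪ T') := by
  ext G
  simp only [edgePattern, Set.mem_inter_iff, Set.mem_ofPred_eq, coe_union, Set.union_subset_iff,
    Set.disjoint_union_left]
  tauto

lemma edgePattern_anti {V : Type} {S T S' T' : Finset (Sym2 V)} (hS : S' ⊆ S) (hT : T' ⊆ T) :
    edgePattern S T ⊆ edgePattern S' T' :=
  fun _ hG => ⟨(coe_subset.2 hS).trans hG.1, hG.2.mono_left (coe_subset.2 hT)⟩

section ErdosRenyi

variable {n : ℕ} {q : ℝ}

lemma graphWeight_nonneg (hq0 : 0 ≤ q) (hq1 : q ≤ 1) (G : SimpleGraph (Fin n)) :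
    0 ≤ graphWeight n q G :=
  mul_nonneg (pow_nonneg hq0 _) (pow_nonneg (sub_nonneg.2 hq1) _)

lemma erProb_nonneg (hq0 : 0 ≤ q) (hq1 : q ≤ 1) (A : Set (SimpleGraph (Fin n))) :
    0 ≤ erProb n q A :=
  sum_nonneg fun G _ => Set.indicator_nonneg (fun G _ => graphWeight_nonneg hq0 hq1 G) G

lemma erProb_mono (hq0 : 0 ≤ q) (hq1 : q ≤ 1) {A B : Set (SimpleGraph (Fin n))} (h : A ⊆ B) :
    erProb n q A ≤ erProb n q B :=
  sum_le_sum fun G _ =>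
    Set.indicator_le_indicator_of_subset h (fun G => graphWeight_nonneg hq0 hq1 G) G

lemma erProb_empty : erProb n q ∅ = 0 := by
  simp [erProb]

lemma card_filter_not_isDiag : #{e : Sym2 (Fin n) | ¬e.IsDiag} = n.choose 2 := by
  rw [← Fintype.card_subtype, Sym2.card_subtype_not_diag, Fintype.card_fin]

open scoped Classical in
lemma sum_graph_eq_sum_powerset (F : Finset (Sym2 (Fin n)) → ℝ) :
    ∑ G : SimpleGraph (Fin n), F G.edgeFinset =
      ∑ t ∈ ({e | ¬e.IsDiag} : Finset (Sym2 (Fin n))).powerset, F t := by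
  refine sum_nbij' (fun G => G.edgeFinset) (fun t => fromEdgeSet ↑t) ?_ ?_ ?_ ?_ ?_
  · intro G _
    rw [mem_powerset]
    intro e he
    simpa using G.not_isDiag_of_mem_edgeSet (mem_edgeFinset.1 he)
  · simp
  · intro G _
    simp
  · intro t ht
    rw [mem_powerset] at ht
    ext e
    simp only [mem_edgeFinset, edgeSet_fromEdgeSet, Set.mem_sdiff, mem_coe, Sym2.mem_diagSet]
    exact ⟨And.left, fun he => ⟨he, by simpa using ht he⟩⟩
  · intro G _
    rfl

open scoped Classical in
lemma indicator_edgePattern_graphWeight {S T : Finset (Sym2 (Fin n))}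
    (hS : ∀ e ∈ S, ¬e.IsDiag) (G : SimpleGraph (Fin n)) :
    (edgePattern S T).indicator (graphWeight n q) G =
      (∏ e ∈ G.edgeFinset, if e ∉ T then q else 0) *
        ∏ e ∈ ({e | ¬e.IsDiag} : Finset (Sym2 (Fin n))) \ G.edgeFinset,
          if e ∉ S then 1 - q else 0 := by
  have hGD : G.edgeFinset ⊆ ({e | ¬e.IsDiag} : Finset (Sym2 (Fin n))) := fun e he => by
    simpa using G.not_isDiag_of_mem_edgeSet (mem_edgeFinset.1 he)
  have hmem : G ∈ edgePattern S T ↔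
      (∀ e ∈ G.edgeFinset, e ∉ T) ∧
        ∀ e ∈ ({e | ¬e.IsDiag} : Finset (Sym2 (Fin n))) \ G.edgeFinset, e ∉ S := by
    simp only [edgePattern, Set.mem_ofPred_eq, ← coe_edgeFinset, coe_subset, disjoint_coe]
    constructor
    · rintro ⟨hsub, hdisj⟩
      exact ⟨fun e he heT => Finset.disjoint_left.1 hdisj heT he,
        fun e he heS => (mem_sdiff.1 he).2 (hsub heS)⟩
    · rintro ⟨hT, hS'⟩
      refine ⟨fun e heS => by_contra fun he => ?_, Finset.disjoint_right.2 hT⟩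
      exact hS' e (mem_sdiff.2 ⟨by simpa using hS e heS, he⟩) heS
  rw [prod_ite_zero, prod_ite_zero, ite_zero_mul_ite_zero, Set.indicator_apply]
  simp only [hmem]
  rw [prod_const, prod_const, card_sdiff_of_subset hGD, card_filter_not_isDiag,
    graphWeight, Nat.card_eq_fintype_card, ← edgeFinset_card]
  congr 1

lemma erProb_edgePattern {S T : Finset (Sym2 (Fin n))} (hS : ∀ e ∈ S, ¬e.IsDiag)
    (hT : ∀ e ∈ T, ¬e.IsDiag) (hST : Disjoint S T) :
    erProb n q (edgePattern S T) = q ^ #S * (1 - q) ^ #T := by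
  classical
  set D : Finset (Sym2 (Fin n)) := {e | ¬e.IsDiag}
  have hSD : S ⊆ D := fun e he => by simpa [D] using hS e he
  have hTD : T ⊆ D := fun e he => by simpa [D] using hT e he
  have hfactor : ∀ e ∈ D, ((if e ∉ T then q else 0) + if e ∉ S then 1 - q else 0) =
      (if e ∈ S then q else 1) * if e ∈ T then 1 - q else 1 := by
    intro e _
    by_cases heS : e ∈ S
    · simp [heS, Finset.disjoint_left.1 hST heS]
    · by_cases heT : e ∈ T <;> simp [heS, heT]
  -- `prod_add` expands the product over all possible edges into a sum over edge sets.
  calc erProb n q (edgePattern S T)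
      = ∑ G : SimpleGraph (Fin n), ((∏ e ∈ G.edgeFinset, if e ∉ T then q else 0) *
          ∏ e ∈ D \ G.edgeFinset, if e ∉ S then 1 - q else 0) :=
        sum_congr rfl fun G _ => indicator_edgePattern_graphWeight hS G
    _ = ∑ t ∈ D.powerset, ((∏ e ∈ t, if e ∉ T then q else 0) *
          ∏ e ∈ D \ t, if e ∉ S then 1 - q else 0) :=
        sum_graph_eq_sum_powerset fun t => (∏ e ∈ t, if e ∉ T then q else 0) *
          ∏ e ∈ D \ t, if e ∉ S then 1 - q else 0
    _ = ∏ e ∈ D, ((if e ∉ T then q else 0) + if e ∉ S then 1 - q else 0) :=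
        (prod_add _ _ _).symm
    _ = q ^ #S * (1 - q) ^ #T := by
      rw [prod_congr rfl hfactor, prod_mul_distrib, prod_ite_mem, prod_ite_mem,
        inter_eq_right.2 hSD, inter_eq_right.2 hTD, prod_const, prod_const]

lemma erProb_edgePattern_le (hq0 : 0 ≤ q) (hq1 : q ≤ 1) {S T : Finset (Sym2 (Fin n))}
    (hT : ∀ e ∈ T, ¬e.IsDiag) : erProb n q (edgePattern S T) ≤ q ^ #S * (1 - q) ^ #T := by
  by_cases h : (∀ e ∈ S, ¬e.IsDiag) ∧ Disjoint S T
  · exact (erProb_edgePattern h.1 hT h.2).le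
  · have hempty : edgePattern S T = ∅ := by
      refine Set.eq_empty_of_forall_notMem fun G ⟨hS, hT⟩ => h ⟨fun e he => ?_, ?_⟩
      · exact G.not_isDiag_of_mem_edgeSet (hS he)
      · exact Finset.disjoint_left.2 fun e heS heT =>
          Set.disjoint_left.1 hT (mem_coe.2 heT) (hS heS)
    rw [hempty, erProb_empty]
    exact mul_nonneg (pow_nonneg hq0 _) (pow_nonneg (sub_nonneg.2 hq1) _)

lemma sum_graphWeight : ∑ G : SimpleGraph (Fin n), graphWeight n q G = 1 := by
  have h := erProb_edgePattern (n := n) (q := q) (S := ∅) (T := ∅) (by simp) (by simp) (by simp)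
  simpa [edgePattern, erProb] using h

lemma erProb_forall_notMem_mul_sq_le {κ : Type*} [Fintype κ] (hq0 : 0 ≤ q) (hq1 : q ≤ 1)
    (A : κ → Set (SimpleGraph (Fin n))) :
    erProb n q {G | ∀ k, G ∉ A k} * (∑ k, erProb n q (A k)) ^ 2 ≤
      ∑ k, ∑ l, (erProb n q (A k ∩ A l) - erProb n q (A k) * erProb n q (A l)) := by
  set X : SimpleGraph (Fin n) → ℝ := fun G => ∑ k, (A k).indicator 1 G with hX
  have hzero : {G | X G = 0} = {G | ∀ k, G ∉ A k} := by
    ext G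
    simp [X, sum_eq_zero_iff_of_nonneg, Set.indicator_nonneg]
  have hw : ∀ (s : Set (SimpleGraph (Fin n))) G,
      graphWeight n q G * s.indicator 1 G = s.indicator (graphWeight n q) G := by
    intro s G
    by_cases hG : G ∈ s <;> simp [hG]
  have hmean : ∑ G, graphWeight n q G * X G = ∑ k, erProb n q (A k) := by
    simp only [hX, mul_sum, hw]
    exact sum_comm
  have hsq : ∑ G, graphWeight n q G * X G ^ 2 = ∑ k, ∑ l, erProb n q (A k ∩ A l) := by
    have hX2 : ∀ G, X G ^ 2 = ∑ k, ∑ l, (A k ∩ A l).indicator 1 G := by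
      intro G
      simp only [hX, sq, sum_mul_sum, Set.inter_indicator_one, Pi.mul_apply]
    simp only [hX2, mul_sum, hw]
    rw [sum_comm]
    exact sum_congr rfl fun k _ => sum_comm
  have h := sum_indicator_eq_zero_mul_sq_le (graphWeight_nonneg hq0 hq1) sum_graphWeight X
  rw [hzero, hmean, hsq] at h
  convert h using 1
  · rfl
  · simp only [sum_sub_distrib, sq, sum_mul_sum]

end ErdosRenyi

def squareSides : Finset (Sym2 (ZMod 4)) := {s(0, 1), s(1, 2), s(2, 3), s(3, 0)}

def squareDiagonals : Finset (Sym2 (ZMod 4)) := {s(0, 2), s(1, 3)}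

lemma isChordlessCycleOn_iff_mem_edgePattern {V : Type} [DecidableEq V] {v : ZMod 4 → V}
    {G : SimpleGraph V} (hv : Function.Injective v) :
    IsChordlessCycleOn G v ↔
      G ∈ edgePattern (squareSides.image (Sym2.map v)) (squareDiagonals.image (Sym2.map v)) := by
  simp only [edgePattern, Set.mem_ofPred_eq, coe_image, squareSides, squareDiagonals, coe_insert,
    coe_singleton, Set.image_insert_eq, Set.image_singleton, Set.insert_subset_iff,
    Set.singleton_subset_iff, Set.disjoint_insert_left, Set.disjoint_singleton_left,
    Sym2.map_mk, SimpleGraph.mem_edgeSet, IsChordlessCycleOn, hv, true_and]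
  constructor
  · rintro ⟨hadj, hnon⟩
    exact ⟨⟨hadj 0, hadj 1, hadj 2, hadj 3⟩, hnon 0 2 (by decide) (by decide) (by decide),
      hnon 1 3 (by decide) (by decide) (by decide)⟩
  · rintro ⟨⟨h01, h12, h23, h30⟩, h02, h13⟩
    refine ⟨fun i => ?_, fun i j hij hj hi => ?_⟩
    · fin_cases i <;> assumption
    have hdiag : ∀ i j : ZMod 4, i ≠ j → j ≠ i + 1 → i ≠ j + 1 →
        (i = 0 ∧ j = 2) ∨ (i = 2 ∧ j = 0) ∨ (i = 1 ∧ j = 3) ∨ (i = 3 ∧ j = 1) := by decide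
    rcases hdiag i j hij hj hi with ⟨rfl, rfl⟩ | ⟨rfl, rfl⟩ | ⟨rfl, rfl⟩ | ⟨rfl, rfl⟩
    exacts [h02, fun h => h02 h.symm, h13, fun h => h13 h.symm]

section FourCycles

variable {n : ℕ} {q : ℝ} {v w : ZMod 4 → Fin n}

lemma setOf_isChordlessCycleOn_eq (hv : Function.Injective v) :
    {G | IsChordlessCycleOn G v} =
      edgePattern (squareSides.image (Sym2.map v)) (squareDiagonals.image (Sym2.map v)) :=
  Set.ext fun _ => isChordlessCycleOn_iff_mem_edgePattern hv

lemma erProb_isChordlessCycleOn (hv : Function.Injective v) :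
    erProb n q {G | IsChordlessCycleOn G v} = q ^ 4 * (1 - q) ^ 2 := by
  rw [setOf_isChordlessCycleOn_eq hv, erProb_edgePattern
    (not_isDiag_of_mem_image_map hv (by decide)) (not_isDiag_of_mem_image_map hv (by decide))
    ((disjoint_image (Sym2.map.injective hv)).2 (by decide)),
    card_image_of_injective _ (Sym2.map.injective hv),
    card_image_of_injective _ (Sym2.map.injective hv)]
  rfl

lemma erProb_inter_le_mul_of_subsingleton (hq0 : 0 ≤ q) (hq1 : q ≤ 1)
    (hv : Function.Injective v) (hw : Function.Injective w)
    (h : (Set.range v ∩ Set.range w).Subsingleton) :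
    erProb n q ({G | IsChordlessCycleOn G v} ∩ {G | IsChordlessCycleOn G w}) ≤
      erProb n q {G | IsChordlessCycleOn G v} * erProb n q {G | IsChordlessCycleOn G w} := by
  have hdisj : ∀ P Q : Finset (Sym2 (ZMod 4)), (∀ e ∈ Q, ¬e.IsDiag) →
      Disjoint (P.image (Sym2.map v)) (Q.image (Sym2.map w)) := fun P Q hQ =>
    disjoint_image_map_of_exists_notMem_range P Q fun e he =>
      exists_mem_notMem_range_of_subsingleton hw h (hQ e he)
  rw [erProb_isChordlessCycleOn hv, erProb_isChordlessCycleOn hw, setOf_isChordlessCycleOn_eq hv,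
    setOf_isChordlessCycleOn_eq hw, edgePattern_inter]
  refine (erProb_edgePattern_le hq0 hq1 (forall_mem_union.2
    ⟨not_isDiag_of_mem_image_map hv (by decide),
      not_isDiag_of_mem_image_map hw (by decide)⟩)).trans (le_of_eq ?_)
  rw [card_union_of_disjoint (hdisj _ _ (by decide)),
    card_union_of_disjoint (hdisj _ _ (by decide)),
    card_image_of_injective _ (Sym2.map.injective hv),
    card_image_of_injective _ (Sym2.map.injective hw),
    card_image_of_injective _ (Sym2.map.injective hv),
    card_image_of_injective _ (Sym2.map.injective hw)]
  change q ^ (4 + 4) * (1 - q) ^ (2 + 2) = _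
  ring

lemma erProb_inter_le_of_notMem_range (hq0 : 0 ≤ q) (hq1 : q ≤ 1)
    (hv : Function.Injective v) (hw : Function.Injective w) {k : ZMod 4}
    (hk : w k ∉ Set.range v) :
    erProb n q ({G | IsChordlessCycleOn G v} ∩ {G | IsChordlessCycleOn G w}) ≤
      q ^ 6 * (1 - q) ^ 3 := by
  set Sₖ := {e ∈ squareSides | k ∈ e}
  set Tₖ := {e ∈ squareDiagonals | k ∈ e}
  -- The sides and the diagonal of `w` through `w k` are not pairs of `v`.
  have hdisj : ∀ P Q : Finset (Sym2 (ZMod 4)), (∀ e ∈ Q, k ∈ e) →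
      Disjoint (P.image (Sym2.map v)) (Q.image (Sym2.map w)) := fun P Q hQ =>
    disjoint_image_map_of_exists_notMem_range P Q fun e he => ⟨k, hQ e he, hk⟩
  have hsub : {G | IsChordlessCycleOn G v} ∩ {G | IsChordlessCycleOn G w} ⊆
      edgePattern (squareSides.image (Sym2.map v) ∪ Sₖ.image (Sym2.map w))
        (squareDiagonals.image (Sym2.map v) ∪ Tₖ.image (Sym2.map w)) := by
    rw [setOf_isChordlessCycleOn_eq hv, setOf_isChordlessCycleOn_eq hw, edgePattern_inter]
    exact edgePattern_anti (union_subset_union_right (image_subset_image (filter_subset _ _)))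
      (union_subset_union_right (image_subset_image (filter_subset _ _)))
  have hSₖ : #Sₖ = 2 := (by decide : ∀ k : ZMod 4, #{e ∈ squareSides | k ∈ e} = 2) k
  have hTₖ : #Tₖ = 1 := (by decide : ∀ k : ZMod 4, #{e ∈ squareDiagonals | k ∈ e} = 1) k
  refine (erProb_mono hq0 hq1 hsub).trans ((erProb_edgePattern_le hq0 hq1 (forall_mem_union.2
    ⟨not_isDiag_of_mem_image_map hv (by decide), not_isDiag_of_mem_image_map hw fun e he =>
      (by decide : ∀ e ∈ squareDiagonals, ¬e.IsDiag) e (mem_filter.1 he).1⟩)).trans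
    (le_of_eq ?_))
  rw [card_union_of_disjoint (hdisj _ _ fun e he => (mem_filter.1 he).2),
    card_union_of_disjoint (hdisj _ _ fun e he => (mem_filter.1 he).2),
    card_image_of_injective _ (Sym2.map.injective hv),
    card_image_of_injective _ (Sym2.map.injective hw),
    card_image_of_injective _ (Sym2.map.injective hv),
    card_image_of_injective _ (Sym2.map.injective hw), hSₖ, hTₖ]
  rfl

open scoped Classical in
lemma erProb_inter_sub_mul_le (hq0 : 0 ≤ q) (hq1 : q ≤ 1) (v w : ZMod 4 → Fin n) :
    erProb n q ({G | IsChordlessCycleOn G v} ∩ {G | IsChordlessCycleOn G w}) -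
        erProb n q {G | IsChordlessCycleOn G v} * erProb n q {G | IsChordlessCycleOn G w} ≤
      (if (Set.range v ∩ Set.range w).Subsingleton then 0 else q ^ 6 * (1 - q) ^ 3) +
        if ∀ k, w k ∈ Set.range v then q ^ 4 * (1 - q) ^ 2 else 0 := by
  have hq1' : 0 ≤ 1 - q := sub_nonneg.2 hq1
  have hprod := mul_nonneg (erProb_nonneg hq0 hq1 {G | IsChordlessCycleOn G v})
    (erProb_nonneg hq0 hq1 {G | IsChordlessCycleOn G w})
  have h₆ : 0 ≤ q ^ 6 * (1 - q) ^ 3 := by positivity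
  have h₄ : 0 ≤ q ^ 4 * (1 - q) ^ 2 := by positivity
  by_cases hinj : Function.Injective v ∧ Function.Injective w
  swap
  · have hempty : {G | IsChordlessCycleOn G v} ∩ {G | IsChordlessCycleOn G w} = ∅ :=
      Set.eq_empty_of_forall_notMem fun G hG => hinj ⟨hG.1.1, hG.2.1⟩
    rw [hempty, erProb_empty]
    split_ifs <;> linarith
  obtain ⟨hv, hw⟩ := hinj
  by_cases hsub : (Set.range v ∩ Set.range w).Subsingleton
  · have := erProb_inter_le_mul_of_subsingleton hq0 hq1 hv hw hsub
    split_ifs <;> linarith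
  rw [if_neg hsub]
  by_cases hall : ∀ k, w k ∈ Set.range v
  · have := erProb_mono hq0 hq1 (Set.inter_subset_left (s := {G | IsChordlessCycleOn G v})
      (t := {G | IsChordlessCycleOn G w}))
    rw [erProb_isChordlessCycleOn hv] at this
    rw [if_pos hall]
    linarith
  · obtain ⟨k, hk⟩ := not_forall.1 hall
    have := erProb_inter_le_of_notMem_range hq0 hq1 hv hw hk
    rw [if_neg hall]
    linarith

open scoped Classical in
lemma card_not_subsingleton_range_inter_le (v : ZMod 4 → Fin n) :
    #{w : ZMod 4 → Fin n | ¬(Set.range v ∩ Set.range w).Subsingleton} ≤ 256 * n ^ 2 := by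
  refine (card_le_card fun w hw => ?_).trans
    ((card_filter_exists_ne_mem_le (univ.image v)).trans ?_)
  · obtain ⟨_, ⟨hav, i, rfl⟩, _, ⟨hbv, j, rfl⟩, hab⟩ :=
      Set.not_subsingleton_iff.1 (mem_filter.1 hw).2
    exact mem_filter.2 ⟨mem_univ w, i, j, fun hij => hab (congrArg w hij),
      by simpa using hav, by simpa using hbv⟩
  · have hR : #(univ.image v) ≤ 4 := card_image_le.trans_eq (card_univ.trans (ZMod.card 4))
    rw [ZMod.card, Fintype.card_fin]
    calc 4 ^ 2 * (#(univ.image v) ^ 2 * n ^ (4 - 2)) ≤ 4 ^ 2 * (4 ^ 2 * n ^ 2) := by gcongr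
      _ = 256 * n ^ 2 := by ring

open scoped Classical in
lemma card_forall_mem_range_le (v : ZMod 4 → Fin n) :
    #{w : ZMod 4 → Fin n | ∀ k, w k ∈ Set.range v} ≤ 256 := by
  have hR : #(univ.image v) ≤ 4 := card_image_le.trans_eq (card_univ.trans (ZMod.card 4))
  have h := card_filter_forall_mem (univ : Finset (ZMod 4)) (univ.image v)
  rw [card_univ, ZMod.card, Nat.sub_self, pow_zero, mul_one] at h
  calc #{w : ZMod 4 → Fin n | ∀ k, w k ∈ Set.range v}
      = #{w : ZMod 4 → Fin n | ∀ k ∈ univ, w k ∈ univ.image v} := by simp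
    _ = #(univ.image v) ^ 4 := h
    _ ≤ 256 := Nat.pow_le_pow_left hR 4

lemma sum_erProb_isChordlessCycleOn :
    ∑ v : ZMod 4 → Fin n, erProb n q {G | IsChordlessCycleOn G v} =
      n.descFactorial 4 * (q ^ 4 * (1 - q) ^ 2) := by
  classical
  have hv : ∀ v : ZMod 4 → Fin n, erProb n q {G | IsChordlessCycleOn G v} =
      if Function.Injective v then q ^ 4 * (1 - q) ^ 2 else 0 := by
    intro v
    split_ifs with hv
    · exact erProb_isChordlessCycleOn hv
    · rw [show {G | IsChordlessCycleOn G v} = ∅ from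
        Set.eq_empty_of_forall_notMem fun G hG => hv hG.1, erProb_empty]
  have hinj : #{v : ZMod 4 → Fin n | Function.Injective v} = n.descFactorial 4 := by
    rw [← Fintype.card_subtype, Fintype.card_congr (Equiv.subtypeInjectiveEquivEmbedding _ _),
      Fintype.card_embedding_eq, ZMod.card, Fintype.card_fin]
  rw [sum_congr rfl fun v _ => hv v, sum_ite, sum_const_zero, add_zero, sum_const, hinj,
    nsmul_eq_mul]

lemma sum_sum_erProb_inter_sub_mul_le (hq0 : 0 ≤ q) (hq1 : q ≤ 1) :
    ∑ v : ZMod 4 → Fin n, ∑ w : ZMod 4 → Fin n,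
      (erProb n q ({G | IsChordlessCycleOn G v} ∩ {G | IsChordlessCycleOn G w}) -
        erProb n q {G | IsChordlessCycleOn G v} * erProb n q {G | IsChordlessCycleOn G w}) ≤
      (n : ℝ) ^ 4 * (256 * n ^ 2 * (q ^ 6 * (1 - q) ^ 3) + 256 * (q ^ 4 * (1 - q) ^ 2)) := by
  classical
  calc _ ≤ ∑ v : ZMod 4 → Fin n, ∑ w : ZMod 4 → Fin n,
        ((if (Set.range v ∩ Set.range w).Subsingleton then 0 else q ^ 6 * (1 - q) ^ 3) +
          if ∀ k, w k ∈ Set.range v then q ^ 4 * (1 - q) ^ 2 else 0) :=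
        sum_le_sum fun v _ => sum_le_sum fun w _ => erProb_inter_sub_mul_le hq0 hq1 v w
    _ ≤ ∑ _v : ZMod 4 → Fin n,
          (256 * (n : ℝ) ^ 2 * (q ^ 6 * (1 - q) ^ 3) + 256 * (q ^ 4 * (1 - q) ^ 2)) := by
        refine sum_le_sum fun v _ => ?_
        rw [sum_add_distrib, sum_ite, sum_ite, sum_const_zero, sum_const_zero, zero_add, add_zero,
          sum_const, sum_const, nsmul_eq_mul, nsmul_eq_mul]
        gcongr
        · exact_mod_cast card_not_subsingleton_range_inter_le v
        · exact_mod_cast card_forall_mem_range_le v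
    _ = _ := by
        rw [sum_const, card_univ, Fintype.card_fun, ZMod.card, Fintype.card_fin, nsmul_eq_mul]
        push_cast
        ring

end FourCycles

lemma pow_four_div_le_descFactorial {n : ℕ} (hn : 6 ≤ n) :
    (n : ℝ) ^ 4 / 16 ≤ n.descFactorial 4 := by
  have h : (n / 2 : ℝ) ≤ ((n + 1 - 4 : ℕ) : ℝ) := by
    rw [Nat.cast_sub (by omega)]
    have : (6 : ℝ) ≤ n := by exact_mod_cast hn
    push_cast
    linarith
  calc (n : ℝ) ^ 4 / 16 = (n / 2 : ℝ) ^ 4 := by ring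
    _ ≤ ((n + 1 - 4 : ℕ) : ℝ) ^ 4 := pow_le_pow_left₀ (by positivity) h 4
    _ ≤ n.descFactorial 4 := by exact_mod_cast Nat.pow_sub_le_descFactorial n 4

theorem erProb_fourChordal_le {n : ℕ} {q : ℝ} (hq0 : 0 < q) (hq1 : q < 1) (hn : 6 ≤ n) :
    erProb n q {G | FourChordal G} ≤
      65536 * (((n : ℝ) ^ 2 * q ^ 2 * (1 - q))⁻¹ + (((n : ℝ) ^ 2 * q ^ 2 * (1 - q)) ^ 2)⁻¹) := by
  have hq1' : 0 < 1 - q := sub_pos.2 hq1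
  have hset : {G | FourChordal G} =
      {G : SimpleGraph (Fin n) | ∀ v : ZMod 4 → Fin n, G ∉ {G | IsChordlessCycleOn G v}} := by
    ext G
    simp [FourChordal]
  have hP := (erProb_forall_notMem_mul_sq_le hq0.le hq1.le
    fun v : ZMod 4 → Fin n => {G | IsChordlessCycleOn G v}).trans
    (sum_sum_erProb_inter_sub_mul_le hq0.le hq1.le)
  rw [← hset, sum_erProb_isChordlessCycleOn] at hP
  have hN := pow_four_div_le_descFactorial hn
  have hNpos : (0 : ℝ) < n.descFactorial 4 := lt_of_lt_of_le (by positivity) hN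
  calc erProb n q {G | FourChordal G}
      ≤ (n : ℝ) ^ 4 * (256 * n ^ 2 * (q ^ 6 * (1 - q) ^ 3) + 256 * (q ^ 4 * (1 - q) ^ 2)) /
          (n.descFactorial 4 * (q ^ 4 * (1 - q) ^ 2)) ^ 2 :=
        (le_div_iff₀ (pow_pos (mul_pos hNpos (by positivity)) 2)).2 hP
    _ ≤ (n : ℝ) ^ 4 * (256 * n ^ 2 * (q ^ 6 * (1 - q) ^ 3) + 256 * (q ^ 4 * (1 - q) ^ 2)) /
          ((n : ℝ) ^ 4 / 16 * (q ^ 4 * (1 - q) ^ 2)) ^ 2 := by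
        gcongr
    _ = 65536 * (((n : ℝ) ^ 2 * q ^ 2 * (1 - q))⁻¹ + (((n : ℝ) ^ 2 * q ^ 2 * (1 - q)) ^ 2)⁻¹) := by
        field_simp
        ring

/-- If `(n(1-p))⁴ p² → ∞`, then with high probability `G(n,1-p)` is not 4-chordal,
i.e. it contains an induced (chordless) 4-cycle. -/
theorem not_fourChordal_whp (p : ℕ → ℝ) (hp : ∀ n, p n ∈ Set.Icc (0 : ℝ) 1)
    (h : Tendsto (fun n : ℕ => ((n : ℝ) * (1 - p n)) ^ 4 * p n ^ 2) atTop atTop) :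
    Tendsto (fun n : ℕ => erProb n (1 - p n) {G | FourChordal G}) atTop (nhds 0) := by
  set x : ℕ → ℝ := fun n => (n : ℝ) ^ 2 * (1 - p n) ^ 2 * p n with hx
  have hx_top : Tendsto x atTop atTop := by
    have hsqrt : (fun n : ℕ => √(((n : ℝ) * (1 - p n)) ^ 4 * p n ^ 2)) = x := by
      funext n
      rw [show ((n : ℝ) * (1 - p n)) ^ 4 * p n ^ 2 = x n ^ 2 by rw [hx]; ring,
        Real.sqrt_sq (mul_nonneg (by positivity) (hp n).1)]
    exact hsqrt ▸ Real.tendsto_sqrt_atTop.comp h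
  have hbound : Tendsto (fun n => 65536 * ((x n)⁻¹ + (x n ^ 2)⁻¹)) atTop (nhds 0) := by
    simpa using (hx_top.inv_tendsto_atTop.add
      ((tendsto_pow_atTop two_ne_zero).comp hx_top).inv_tendsto_atTop).const_mul 65536
  refine tendsto_of_tendsto_of_tendsto_of_le_of_le' tendsto_const_nhds hbound
    (Eventually.of_forall fun n => erProb_nonneg (sub_nonneg.2 (hp n).2)
      (sub_le_self _ (hp n).1) _) ?_
  filter_upwards [eventually_ge_atTop 6, hx_top.eventually_gt_atTop 0] with n hn hxn
  have hp0 : 0 < p n := pos_of_mul_pos_right hxn (by positivity)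
  have hp1 : p n < 1 := lt_of_le_of_ne (hp n).2 fun h1 => by simp [x, h1] at hxn
  simpa [x, sub_sub_cancel] using
    erProb_fourChordal_le (q := 1 - p n) (sub_pos.2 hp1) (sub_lt_self 1 hp0) hn
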